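/- Stationarity of the binomial distribution for the Ehrenfest process (Theorem 3.3(c)): for every j ∈ {0,1,…,N} and every t ≥ 0, Σ_{i=0}^{N} ω(i) · p_{ij}(t) = ω(j), where ω(x) := C(N,x) p^x q^{N−x}. -/

import Mathlib

open Finset

/-- The Krawtchouk polynomial `K_l(x; N; p)`, defined via the hypergeometric sum. -/
noncomputable def krawtchouk (N : ℕ) (p : ℝ) (l x : ℕ) : ℝ :=
  ∑ k ∈ Finset.range (N + 1),
    ((ascPochhammer ℝ k).eval (-(l : ℝ)) * (ascPochhammer ℝ k).eval (-(x : ℝ))) /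
      ((ascPochhammer ℝ k).eval (-(N : ℝ)) * (Nat.factorial k : ℝ)) * (1 / p) ^ k

/-- Transition probabilities `p_{ij}(t)` of the continuous-time Ehrenfest process,
where `p = α/(α+β)` and `q = 1 - p`. -/
noncomputable def ehrenfestP (N : ℕ) (p q lam α β : ℝ) (i j : ℕ) (t : ℝ) : ℝ :=
  (N.choose j : ℝ) * (p / q) ^ j *
    ∑ x ∈ Finset.range (N + 1),
      (N.choose x : ℝ) * p ^ x * q ^ (N - x) * krawtchouk N p i x * krawtchouk N p j x *
        Real.exp (-(lam * (α + β) * (x : ℝ) * t))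

/-- The binomial weight `ω(x) = C(N,x) p^x q^{N-x}`. -/
noncomputable def binomWeight (N : ℕ) (p q : ℝ) (x : ℕ) : ℝ :=
  (N.choose x : ℝ) * p ^ x * q ^ (N - x)

/-!
Summing first over `i`, the left side becomes
`C(N,j) (p/q)^j Σ_x ω(x) K_j(x) e^{-λ(α+β)xt} Σ_i ω(i) K_i(x)`.
By the duality `K_i(x) = K_x(i)`, the inner sum is the `ω`-pairing of `K_x` with `K_0 = 1`,
which is `δ_{x0}`: expanding `K_x(i) = Σ_k (-1)^k C(x,k) C(i,k) / (C(N,k) p^k)` and using the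
binomial factorial moments `Σ_i ω(i) C(i,k) = C(N,k) p^k` leaves `Σ_k (-1)^k C(x,k) = δ_{x0}`.
Only `x = 0` survives, and `C(N,j) (p/q)^j q^N = ω(j)`.
-/

theorem ascPochhammer_eval_neg_natCast {R : Type*} [CommRing R] (k n : ℕ) :
    (ascPochhammer R k).eval (-(n : R)) = (-1) ^ k * (k.factorial * n.choose k) := by
  rw [ascPochhammer_eval_neg_eq_descPochhammer, descPochhammer_eval_eq_descFactorial,
    Nat.descFactorial_eq_factorial_mul_choose, Nat.cast_mul]

theorem sum_range_choose_mul_choose_mul_pow_mul_pow {R : Type*} [CommSemiring R]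
    {N k : ℕ} (hk : k ≤ N) (p q : R) :
    ∑ i ∈ range (N + 1), (N.choose i : R) * i.choose k * p ^ i * q ^ (N - i) =
      N.choose k * p ^ k * (p + q) ^ (N - k) := by
  have hsplit : N + 1 = k + (N - k + 1) := by omega
  rw [hsplit, sum_range_add, add_pow, mul_sum]
  have below : ∀ i ∈ range k, (N.choose i : R) * i.choose k * p ^ i * q ^ (N - i) = 0 :=
    fun i hi ↦ by rw [Nat.choose_eq_zero_of_lt (mem_range.1 hi)]; simp
  rw [sum_eq_zero below, zero_add]
  refine sum_congr rfl fun m _ ↦ ?_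
  have hchoose : N.choose (k + m) * (k + m).choose k = N.choose k * (N - k).choose m := by
    simpa using Nat.choose_mul (n := N) (k := k + m) (s := k) (by omega)
  have hsub : N - (k + m) = N - k - m := by omega
  rw [hsub, pow_add, ← Nat.cast_mul, hchoose, Nat.cast_mul]
  ring

theorem sum_range_neg_one_pow_mul_choose {R : Type*} [Ring R] {N x : ℕ} (hx : x ≤ N) :
    ∑ k ∈ range (N + 1), (-1 : R) ^ k * x.choose k = if x = 0 then 1 else 0 := by
  have hzero : ∀ k ∈ range (N + 1), k ∉ range (x + 1) → (-1 : R) ^ k * x.choose k = 0 :=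
    fun k _ hk ↦ by rw [Nat.choose_eq_zero_of_lt (by simpa using hk)]; simp
  rw [← sum_subset (range_subset_range.2 (by omega)) hzero]
  have h := congrArg (Int.cast : ℤ → R) (Int.alternating_sum_range_choose (n := x))
  push_cast at h
  exact h

theorem krawtchouk_comm (N : ℕ) (p : ℝ) (l x : ℕ) : krawtchouk N p l x = krawtchouk N p x l := by
  unfold krawtchouk
  exact sum_congr rfl fun k _ ↦ by ring

theorem krawtchouk_zero_right (N : ℕ) (p : ℝ) (l : ℕ) : krawtchouk N p l 0 = 1 := by
  rw [krawtchouk, sum_eq_single_of_mem 0 (by simp)]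
  · simp
  · intro k _ hk
    simp [hk]

theorem krawtchouk_eq_sum_choose (N : ℕ) {p : ℝ} (hp : p ≠ 0) (l x : ℕ) :
    krawtchouk N p l x =
      ∑ k ∈ range (N + 1), (-1) ^ k * l.choose k * x.choose k / (N.choose k * p ^ k) := by
  refine sum_congr rfl fun k hk ↦ ?_
  have hN : (N.choose k : ℝ) ≠ 0 := by
    exact_mod_cast (Nat.choose_pos (Nat.lt_succ_iff.1 (mem_range.1 hk))).ne'
  simp only [ascPochhammer_eval_neg_natCast, one_div, inv_pow]
  field_simp

theorem sum_binomWeight_mul_krawtchouk (N : ℕ) {p q : ℝ} (hp : p ≠ 0) (hpq : p + q = 1)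
    {x : ℕ} (hx : x ≤ N) :
    ∑ i ∈ range (N + 1), binomWeight N p q i * krawtchouk N p x i = if x = 0 then 1 else 0 := by
  simp only [krawtchouk_eq_sum_choose N hp, mul_sum]
  rw [sum_comm, ← sum_range_neg_one_pow_mul_choose hx]
  refine sum_congr rfl fun k hk ↦ ?_
  have hkN : k ≤ N := Nat.lt_succ_iff.1 (mem_range.1 hk)
  have hN : (N.choose k : ℝ) ≠ 0 := by exact_mod_cast (Nat.choose_pos hkN).ne'
  have hmoment := sum_range_choose_mul_choose_mul_pow_mul_pow hkN p q
  rw [hpq, one_pow, mul_one] at hmoment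
  calc ∑ i ∈ range (N + 1), binomWeight N p q i *
        ((-1) ^ k * x.choose k * i.choose k / (N.choose k * p ^ k))
      = (-1) ^ k * x.choose k / (N.choose k * p ^ k) *
          ∑ i ∈ range (N + 1), (N.choose i : ℝ) * i.choose k * p ^ i * q ^ (N - i) := by
        rw [mul_sum]
        exact sum_congr rfl fun i _ ↦ by rw [binomWeight]; ring
    _ = (-1) ^ k * x.choose k := by
        rw [hmoment]
        field_simp

theorem sum_binomWeight_mul_sum_krawtchouk (N : ℕ) {p q : ℝ} (hp : p ≠ 0) (hpq : p + q = 1)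
    (g : ℕ → ℝ) :
    ∑ i ∈ range (N + 1), binomWeight N p q i *
        ∑ x ∈ range (N + 1), binomWeight N p q x * krawtchouk N p i x * g x =
      q ^ N * g 0 := by
  calc _ = ∑ x ∈ range (N + 1), binomWeight N p q x * g x *
          ∑ i ∈ range (N + 1), binomWeight N p q i * krawtchouk N p x i := by
        simp only [mul_sum]
        rw [sum_comm]
        exact sum_congr rfl fun x _ ↦ sum_congr rfl fun i _ ↦ by rw [krawtchouk_comm]; ring
    _ = binomWeight N p q 0 * g 0 := by
        rw [sum_eq_single_of_mem 0 (by simp)]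
        · rw [sum_binomWeight_mul_krawtchouk N hp hpq (Nat.zero_le N), if_pos rfl, mul_one]
        · intro x hx hx0
          rw [sum_binomWeight_mul_krawtchouk N hp hpq (Nat.lt_succ_iff.1 (mem_range.1 hx)),
            if_neg hx0, mul_zero]
    _ = q ^ N * g 0 := by simp [binomWeight]

theorem ehrenfest_binomial_stationary_general (N : ℕ) (lam α β : ℝ)
    (hα : α ∈ Set.Ioc (0 : ℝ) 1) (hβ : β ∈ Set.Ioc (0 : ℝ) 1)
    (p q : ℝ) (hp : p = α / (α + β)) (hq : q = 1 - p)
    (j : ℕ) (hj : j ≤ N) (t : ℝ) :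
    ∑ i ∈ Finset.range (N + 1), binomWeight N p q i * ehrenfestP N p q lam α β i j t =
      binomWeight N p q j := by
  have hαβ : 0 < α + β := add_pos hα.1 hβ.1
  have hp0 : p ≠ 0 := by rw [hp]; exact (div_pos hα.1 hαβ).ne'
  have hq0 : q ≠ 0 := by
    rw [hq, hp, one_sub_div hαβ.ne', add_sub_cancel_left]
    exact (div_pos hβ.1 hαβ).ne'
  have hpq : p + q = 1 := by rw [hq]; ring
  have hP : ∀ i, ehrenfestP N p q lam α β i j t = N.choose j * (p / q) ^ j *
      ∑ x ∈ range (N + 1), binomWeight N p q x * krawtchouk N p i x *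
        (krawtchouk N p j x * Real.exp (-(lam * (α + β) * x * t))) := fun i ↦ by
    simp only [ehrenfestP, binomWeight, mul_assoc]
  have hqN : q ^ N = q ^ j * q ^ (N - j) := by rw [← pow_add, Nat.add_sub_cancel' hj]
  simp_rw [hP, mul_left_comm (binomWeight N p q _), ← mul_sum,
    sum_binomWeight_mul_sum_krawtchouk N hp0 hpq, krawtchouk_zero_right, Nat.cast_zero,
    mul_zero, zero_mul, neg_zero, Real.exp_zero, mul_one]
  rw [binomWeight, div_pow, hqN]
  field_simp

/-- The binomial distribution is stationary for the Ehrenfest process. -/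
theorem ehrenfest_binomial_stationary (N : ℕ) (lam α β : ℝ) (hlam : 0 < lam)
    (hα : α ∈ Set.Ioc (0 : ℝ) 1) (hβ : β ∈ Set.Ioc (0 : ℝ) 1)
    (p q : ℝ) (hp : p = α / (α + β)) (hq : q = 1 - p)
    (j : ℕ) (hj : j ≤ N) (t : ℝ) (ht : 0 ≤ t) :
    ∑ i ∈ Finset.range (N + 1), binomWeight N p q i * ehrenfestP N p q lam α β i j t =
      binomWeight N p q j :=
  ehrenfest_binomial_stationary_general N lam α β hα hβ p q hp hq j hj t
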